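/- Let p be a prime and G a finite p-group such that CD(G) is a quasi-antichain of width w ≥ 3 with G ∈ CD(G), and let a be the positive integer with |G/Z(G)| = p^{2a}. Let t be the number of abelian atoms of CD(G). If t = 1 then p = 2. -/
import Mathlib


/-- The Chermak-Delgado measure of a subgroup `H` of a finite group `G`:
`m_G(H) = |H| · |C_G(H)|`. -/
noncomputable def CDmeasure {G : Type*} [Group G] (H : Subgroup G) : ℕ :=
  Nat.card H * Nat.card (Subgroup.centralizer (H : Set G))

/-- `H` belongs to the Chermak-Delgado lattice of `G`: its measure is maximal. -/
def inCD {G : Type*} [Group G] (H : Subgroup G) : Prop :=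
  ∀ K : Subgroup G, CDmeasure K ≤ CDmeasure H

/-- `CD(G)` is a quasi-antichain of width `w` with `G ∈ CD(G)`. -/
def IsQACD (G : Type*) [Group G] (w : ℕ) : Prop :=
  inCD (⊤ : Subgroup G) ∧ inCD (Subgroup.center G) ∧
  (∀ K : Subgroup G, inCD K → Subgroup.center G ≤ K) ∧
  (∀ K K' : Subgroup G, inCD K → inCD K' →
    Subgroup.center G < K → K ≤ K' → K' < ⊤ → K = K') ∧
  {K : Subgroup G | inCD K ∧ Subgroup.center G < K ∧ K < ⊤}.ncard = w

/-- The set of abelian atoms of the quasi-antichain `CD(G)`. -/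
def abelianAtoms (G : Type*) [Group G] : Set (Subgroup G) :=
  {K : Subgroup G | inCD K ∧ Subgroup.center G < K ∧ K < ⊤ ∧ ∀ x y : K, x * y = y * x}

section CDhelpers

open Subgroup

variable {G : Type*} [Group G] [Finite G]

/-- Product counting: `|H| * |K| ≤ |H ⊔ K| * |H ⊓ K|`. -/
lemma card_mul_card_le_sup_inf (H K : Subgroup G) :
    Nat.card H * Nat.card K ≤ Nat.card ↥(H ⊔ K) * Nat.card ↥(H ⊓ K) := by
  classical
  have hw : ∀ g : G, ∃ q : G × G, (∃ h ∈ H, ∃ k ∈ K, h * k = g) →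
      q.1 ∈ H ∧ q.2 ∈ K ∧ q.1 * q.2 = g := by
    intro g
    by_cases hg : ∃ h ∈ H, ∃ k ∈ K, h * k = g
    · obtain ⟨h, hh, k, hk, hhk⟩ := hg
      exact ⟨(h, k), fun _ => ⟨hh, hk, hhk⟩⟩
    · exact ⟨(1, 1), fun hg' => absurd hg' hg⟩
  choose wit hwit using hw
  have hmem1 : ∀ q : ↥H × ↥K, (q.1 : G) * q.2 ∈ H ⊔ K := fun q =>
    mul_mem ((le_sup_left : H ≤ H ⊔ K) q.1.2) ((le_sup_right : K ≤ H ⊔ K) q.2.2)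
  have hmem2 : ∀ q : ↥H × ↥K, (wit ((q.1 : G) * q.2)).1⁻¹ * q.1 ∈ H ⊓ K := by
    intro q
    have hspec := hwit ((q.1 : G) * q.2) ⟨q.1, q.1.2, q.2, q.2.2, rfl⟩
    have key : (wit ((q.1 : G) * q.2)).1⁻¹ * (q.1 : G) =
        (wit ((q.1 : G) * q.2)).2 * (q.2 : G)⁻¹ := by
      rw [inv_mul_eq_iff_eq_mul, ← mul_assoc, hspec.2.2, mul_inv_cancel_right]
    exact mem_inf.mpr ⟨mul_mem (inv_mem hspec.1) q.1.2,
      key ▸ mul_mem hspec.2.1 (inv_mem q.2.2)⟩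
  have hinj : Function.Injective (fun q : ↥H × ↥K =>
      ((⟨(q.1 : G) * q.2, hmem1 q⟩ : ↥(H ⊔ K)),
       (⟨(wit ((q.1 : G) * q.2)).1⁻¹ * q.1, hmem2 q⟩ : ↥(H ⊓ K)))) := by
    intro q q' hqq
    have h1 : (q.1 : G) * q.2 = (q'.1 : G) * q'.2 := congrArg (fun x => (x.1 : G)) hqq
    have h2 : (wit ((q.1 : G) * q.2)).1⁻¹ * (q.1 : G) =
        (wit ((q'.1 : G) * q'.2)).1⁻¹ * q'.1 := congrArg (fun x => (x.2 : G)) hqq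
    rw [h1] at h2
    have hq1 : (q.1 : G) = q'.1 := mul_left_cancel h2
    have hq2 : (q.2 : G) = q'.2 := by rw [hq1] at h1; exact mul_left_cancel h1
    exact Prod.ext (Subtype.ext hq1) (Subtype.ext hq2)
  calc Nat.card H * Nat.card K = Nat.card (↥H × ↥K) := (Nat.card_prod _ _).symm
    _ ≤ Nat.card (↥(H ⊔ K) × ↥(H ⊓ K)) := Nat.card_le_card_of_injective _ hinj
    _ = _ := Nat.card_prod _ _

lemma CDmeasure_pos (H : Subgroup G) : 0 < CDmeasure H :=
  Nat.mul_pos Nat.card_pos Nat.card_pos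

lemma CDmeasure_top' : CDmeasure (⊤ : Subgroup G) =
    Nat.card G * Nat.card (center G) := by
  rw [CDmeasure, card_top, coe_top, centralizer_univ]

omit [Finite G] in
lemma centralizer_inf_centralizer_le (H K : Subgroup G) :
    centralizer (H : Set G) ⊓ centralizer (K : Set G) ≤ centralizer (↑(H ⊔ K) : Set G) := by
  intro x hx
  rw [mem_inf] at hx
  rw [mem_centralizer_iff]
  intro h hh
  have hle : H ⊔ K ≤ centralizer {x} := by
    refine sup_le ?_ ?_ <;> intro y hy <;> rw [mem_centralizer_iff] <;> rintro z hz
    · rw [Set.mem_singleton_iff] at hz; subst hz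
      exact (hx.1 y hy).symm
    · rw [Set.mem_singleton_iff] at hz; subst hz
      exact (hx.2 y hy).symm
  have := hle hh
  rw [mem_centralizer_iff] at this
  exact (this x rfl).symm

lemma inCD_inf_sup {H K : Subgroup G} (hH : inCD H) (hK : inCD K) :
    inCD (H ⊓ K) ∧ inCD (H ⊔ K) := by
  have hmeq : CDmeasure K = CDmeasure H := le_antisymm (hH K) (hK H)
  have h1 := card_mul_card_le_sup_inf H K
  have h3 : Nat.card ↥(centralizer (H : Set G) ⊔ centralizer (K : Set G)) ≤
      Nat.card ↥(centralizer ((H ⊓ K : Subgroup G) : Set G)) :=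
    Subgroup.card_le_of_le (sup_le
      (centralizer_le (SetLike.coe_subset_coe.mpr inf_le_left))
      (centralizer_le (SetLike.coe_subset_coe.mpr inf_le_right)))
  have h4 : Nat.card ↥(centralizer (H : Set G) ⊓ centralizer (K : Set G)) ≤
      Nat.card ↥(centralizer ((H ⊔ K : Subgroup G) : Set G)) :=
    Subgroup.card_le_of_le (centralizer_inf_centralizer_le H K)
  have h2 : Nat.card ↥(centralizer (H : Set G)) * Nat.card ↥(centralizer (K : Set G)) ≤
      Nat.card ↥(centralizer ((H ⊓ K : Subgroup G) : Set G)) *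
        Nat.card ↥(centralizer ((H ⊔ K : Subgroup G) : Set G)) :=
    (card_mul_card_le_sup_inf _ _).trans (Nat.mul_le_mul h3 h4)
  have key : CDmeasure H * CDmeasure K ≤ CDmeasure (H ⊓ K) * CDmeasure (H ⊔ K) := by
    calc CDmeasure H * CDmeasure K
        = (Nat.card H * Nat.card K) *
          (Nat.card ↥(centralizer (H : Set G)) * Nat.card ↥(centralizer (K : Set G))) := by
          rw [CDmeasure, CDmeasure]; ring
      _ ≤ (Nat.card ↥(H ⊔ K) * Nat.card ↥(H ⊓ K)) *
          (Nat.card ↥(centralizer ((H ⊓ K : Subgroup G) : Set G)) *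
           Nat.card ↥(centralizer ((H ⊔ K : Subgroup G) : Set G))) := Nat.mul_le_mul h1 h2
      _ = CDmeasure (H ⊓ K) * CDmeasure (H ⊔ K) := by rw [CDmeasure, CDmeasure]; ring
  rw [hmeq] at key
  have hIle := hH (H ⊓ K)
  have hSle := hH (H ⊔ K)
  have hpos : 0 < CDmeasure H := CDmeasure_pos H
  have hIeq : CDmeasure (H ⊓ K) = CDmeasure H := by
    refine le_antisymm hIle ?_
    have : CDmeasure H * CDmeasure H ≤ CDmeasure (H ⊓ K) * CDmeasure H :=
      key.trans (Nat.mul_le_mul_left _ hSle)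
    exact Nat.le_of_mul_le_mul_right this hpos
  have hSeq : CDmeasure (H ⊔ K) = CDmeasure H := by
    refine le_antisymm hSle ?_
    have : CDmeasure H * CDmeasure H ≤ CDmeasure H * CDmeasure (H ⊔ K) := by
      calc CDmeasure H * CDmeasure H ≤ CDmeasure (H ⊓ K) * CDmeasure (H ⊔ K) := key
        _ ≤ CDmeasure H * CDmeasure (H ⊔ K) := Nat.mul_le_mul_right _ hIle
    exact Nat.le_of_mul_le_mul_left this hpos
  exact ⟨fun L => (hH L).trans_eq hIeq.symm, fun L => (hH L).trans_eq hSeq.symm⟩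

lemma inCD_centralizer {K : Subgroup G} (hK : inCD K) :
    inCD (centralizer (K : Set G)) ∧
      centralizer ((centralizer (K : Set G) : Subgroup G) : Set G) = K := by
  have hle : K ≤ centralizer ((centralizer (K : Set G) : Subgroup G) : Set G) :=
    le_centralizer_iff.mp le_rfl
  have hge : CDmeasure K ≤ CDmeasure (centralizer (K : Set G)) := by
    rw [CDmeasure, CDmeasure]
    calc Nat.card K * Nat.card ↥(centralizer (K : Set G))
        ≤ Nat.card ↥(centralizer ((centralizer (K : Set G) : Subgroup G) : Set G)) *
          Nat.card ↥(centralizer (K : Set G)) :=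
          Nat.mul_le_mul_right _ (Subgroup.card_le_of_le hle)
      _ = _ := Nat.mul_comm _ _
  have hCD : inCD (centralizer (K : Set G)) := fun L => (hK L).trans hge
  have heq : CDmeasure (centralizer (K : Set G)) = CDmeasure K :=
    le_antisymm (hK _) hge
  have hcard : Nat.card ↥(centralizer ((centralizer (K : Set G) : Subgroup G) : Set G)) =
      Nat.card K := by
    rw [CDmeasure, CDmeasure] at heq
    have hpos : 0 < Nat.card ↥(centralizer (K : Set G)) := Nat.card_pos
    have : Nat.card ↥(centralizer (K : Set G)) *
        Nat.card ↥(centralizer ((centralizer (K : Set G) : Subgroup G) : Set G)) =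
        Nat.card ↥(centralizer (K : Set G)) * Nat.card K := by
      rw [heq, Nat.mul_comm]
    exact Nat.eq_of_mul_eq_mul_left hpos this
  refine ⟨hCD, ?_⟩
  have : (K : Set G) =
      (centralizer ((centralizer (K : Set G) : Subgroup G) : Set G) : Set G) := by
    apply Set.eq_of_subset_of_ncard_le (SetLike.coe_subset_coe.mpr hle)
    rw [← Nat.card_coe_set_eq, ← Nat.card_coe_set_eq]
    exact le_of_eq (by exact_mod_cast hcard)
  exact (SetLike.coe_injective this).symm

omit [Finite G] in
lemma centralizer_center_eq_top : centralizer ((center G : Subgroup G) : Set G) = ⊤ := by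
  rw [eq_top_iff]
  intro g _
  rw [mem_centralizer_iff]
  intro h hh
  exact (mem_center_iff.mp hh g).symm

end CDhelpers

/-- for a finite `p`-group `G` with `CD(G)` a quasi-antichain of
width `w ≥ 3`, `G ∈ CD(G)`, and `|G/Z(G)| = p^(2a)`: if the number `t` of
abelian atoms is `1`, then `p = 2`. -/
theorem stmt10 {G : Type*} [Group G] [Finite G] (p : ℕ) (hp : p.Prime)
    (hpG : IsPGroup p G) (w : ℕ) (hw : 3 ≤ w) (hQA : IsQACD G w)
    (a : ℕ) (ha : 0 < a)
    (hcard : Nat.card (G ⧸ Subgroup.center G) = p ^ (2 * a))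
    (t : ℕ) (ht : t = (abelianAtoms G).ncard) :
    t = 1 → p = 2 := by
  intro ht1
  open Subgroup in
  obtain ⟨hT, hZcd, hZle, hanti, hwidth⟩ := hQA
  classical
  haveI : Finite (Subgroup G) :=
    Finite.of_injective (fun H : Subgroup G => (H : Set G)) SetLike.coe_injective
  -- measure of every CD member equals |G| * |Z|
  have Mval : ∀ H : Subgroup G, inCD H →
      CDmeasure H = Nat.card G * Nat.card (Subgroup.center G) := by
    intro H hH
    rw [← CDmeasure_top']
    exact le_antisymm (hT H) (hH ⊤)
  -- pairs of distinct atoms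
  have hpair : ∀ K K' : Subgroup G, inCD K → inCD K' →
      Subgroup.center G < K → Subgroup.center G < K' → K < ⊤ → K' < ⊤ → K ≠ K' →
      K ⊓ K' = Subgroup.center G ∧ K ⊔ K' = ⊤ := by
    intro K K' hK hK' hZK hZK' hKt hK't hne
    obtain ⟨hInf, hSup⟩ := inCD_inf_sup hK hK'
    constructor
    · rcases (hZle _ hInf).lt_or_eq with hlt | heq
      · exfalso
        have e1 := hanti (K ⊓ K') K hInf hK hlt inf_le_left hKt
        have e2 := hanti (K ⊓ K') K' hInf hK' hlt inf_le_right hK't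
        exact hne (e1.symm.trans e2)
      · exact heq.symm
    · by_contra hne2
      have hlt : K ⊔ K' < ⊤ := lt_top_iff_ne_top.mpr hne2
      have e1 := hanti K (K ⊔ K') hK hSup hZK le_sup_left hlt
      have e2 := hanti K' (K ⊔ K') hK' hSup hZK' le_sup_right hlt
      exact hne (e1.trans e2.symm)
  -- |G| = p^(2a) * |Z|
  have hG : Nat.card G = p ^ (2 * a) * Nat.card (Subgroup.center G) := by
    rw [Subgroup.card_eq_card_quotient_mul_card_subgroup (Subgroup.center G), hcard]
  have hZpos : 0 < Nat.card (Subgroup.center G) := Nat.card_pos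
  -- the unique abelian atom
  rw [ht1] at ht
  obtain ⟨A, hAsingle⟩ := Set.ncard_eq_one.mp ht.symm
  have hA : A ∈ abelianAtoms G := hAsingle ▸ rfl
  obtain ⟨hAcd, hZA, hAt, habA⟩ := hA
  have hAcomm : ∀ x y : G, x ∈ A → y ∈ A → x * y = y * x := by
    intro x y hx hy
    exact congrArg Subtype.val (habA ⟨x, hx⟩ ⟨y, hy⟩)
  -- A = C_G(A)
  have hAleC : A ≤ Subgroup.centralizer (A : Set G) := by
    intro x hx
    rw [Subgroup.mem_centralizer_iff]
    intro h hh
    exact hAcomm h x hh hx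
  obtain ⟨hCAcd, hCCA⟩ := inCD_centralizer hAcd
  have hCAt : Subgroup.centralizer (A : Set G) < ⊤ := by
    rw [lt_top_iff_ne_top]
    intro heq
    have hAle : A ≤ Subgroup.center G := by
      intro x hx
      rw [Subgroup.mem_center_iff]
      intro g
      have hg : g ∈ Subgroup.centralizer (A : Set G) := heq ▸ Subgroup.mem_top g
      exact (Subgroup.mem_centralizer_iff.mp hg x hx).symm
    exact absurd hAle hZA.not_ge
  have hACA : A = Subgroup.centralizer (A : Set G) :=
    hanti A (Subgroup.centralizer (A : Set G)) hAcd hCAcd hZA hAleC hCAt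
  have cardA : Nat.card A * Nat.card A = Nat.card G * Nat.card (Subgroup.center G) := by
    have := Mval A hAcd
    rw [CDmeasure, ← hACA] at this
    exact this
  have cardA' : Nat.card A = p ^ a * Nat.card (Subgroup.center G) := by
    have h2 : (p ^ a * Nat.card (Subgroup.center G)) * (p ^ a * Nat.card (Subgroup.center G)) =
        Nat.card A * Nat.card A := by
      rw [cardA, hG, two_mul, pow_add]; ring
    exact (Nat.mul_self_inj.mp h2).symm
  have hpa1 : 1 < p ^ a := Nat.one_lt_pow ha.ne' hp.one_lt
  have cardZltA : Nat.card (Subgroup.center G) < Nat.card A := by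
    rw [cardA']
    calc Nat.card (Subgroup.center G) = 1 * Nat.card (Subgroup.center G) := (one_mul _).symm
      _ < p ^ a * Nat.card (Subgroup.center G) := (Nat.mul_lt_mul_right hZpos).mpr hpa1
  -- a nonabelian atom K exists
  have hexK : ∃ K : Subgroup G, (inCD K ∧ Subgroup.center G < K ∧ K < ⊤) ∧
      ¬(∀ x y : ↥K, x * y = y * x) := by
    by_contra hcon
    push_neg at hcon
    have hsub : {K : Subgroup G | inCD K ∧ Subgroup.center G < K ∧ K < ⊤} ⊆
        abelianAtoms G := by
      intro K hK
      exact ⟨hK.1, hK.2.1, hK.2.2, hcon K hK⟩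
    have : w ≤ 1 := by
      rw [← hwidth]
      exact le_trans (Set.ncard_le_ncard hsub (Set.toFinite _)) ht.ge
    omega
  obtain ⟨K, ⟨hKcd, hZK, hKt⟩, hKnab⟩ := hexK
  -- L = C_G(K)
  set L := Subgroup.centralizer (K : Set G) with hLdef
  obtain ⟨hLcd, hCCK⟩ := inCD_centralizer hKcd
  have hLK : ∀ l ∈ L, ∀ k ∈ K, k * l = l * k := by
    intro l hl k hk
    exact Subgroup.mem_centralizer_iff.mp hl k hk
  have hZL : Subgroup.center G < L := by
    refine (hZle L hLcd).lt_of_ne ?_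
    intro heq
    have hKtop : K = ⊤ := by
      rw [← hCCK, ← hLdef, ← heq, centralizer_center_eq_top]
    exact hKt.ne hKtop
  have hLt : L < ⊤ := by
    rw [lt_top_iff_ne_top]
    intro heq
    have hKz : K = Subgroup.center G := by
      rw [← hCCK, ← hLdef, heq, Subgroup.coe_top, Subgroup.centralizer_univ]
    exact hZK.ne' hKz
  have hKneL : K ≠ L := by
    intro heq
    apply hKnab
    intro x y
    apply Subtype.ext
    exact hLK y (heq ▸ y.2) x x.2
  have hLnab : ¬(∀ x y : ↥L, x * y = y * x) := by
    intro hcomm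
    have hLleK : L ≤ K := by
      rw [← hCCK]
      intro x hx
      rw [Subgroup.mem_centralizer_iff]
      intro h hh
      exact congrArg Subtype.val (hcomm ⟨h, hh⟩ ⟨x, hx⟩)
    exact hKneL (hanti L K hLcd hKcd hZL hLleK hKt).symm
  have hAneK : A ≠ K := fun heq => hKnab (heq ▸ habA)
  have hAneL : A ≠ L := fun heq => hLnab (heq ▸ habA)
  obtain ⟨hKLinf, hKLsup⟩ := hpair K L hKcd hLcd hZK hZL hKt hLt hKneL
  obtain ⟨hAKinf, -⟩ := hpair A K hAcd hKcd hZA hZK hAt hKt hAneK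
  obtain ⟨hALinf, -⟩ := hpair A L hAcd hLcd hZA hZL hAt hLt hAneL
  -- decomposition G = K * L
  have hdec : ∀ g : G, ∃ k l : G, k ∈ K ∧ l ∈ L ∧ g = k * l := by
    let φ : ↥K × ↥L →* G := {
      toFun := fun q => (q.1 : G) * q.2
      map_one' := by simp
      map_mul' := by
        rintro ⟨k1, l1⟩ ⟨k2, l2⟩
        show ((k1 * k2 : ↥K) : G) * ((l1 * l2 : ↥L) : G) = ((k1 : G) * l1) * ((k2 : G) * l2)
        push_cast
        have h := hLK l1 l1.2 k2 k2.2
        rw [mul_assoc, ← mul_assoc (k2 : G), h, mul_assoc, ← mul_assoc, ← mul_assoc] }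
    have hKr : K ≤ φ.range := by
      intro k hk
      exact ⟨(⟨k, hk⟩, 1), by simp [φ]⟩
    have hLr : L ≤ φ.range := by
      intro l hl
      exact ⟨(1, ⟨l, hl⟩), by simp [φ]⟩
    intro g
    have hg : g ∈ φ.range := by
      have : (⊤ : Subgroup G) ≤ φ.range := by
        rw [← hKLsup]; exact sup_le hKr hLr
      exact this (Subgroup.mem_top g)
    obtain ⟨⟨k, l⟩, hq⟩ := hg
    exact ⟨k, l, k.2, l.2, hq.symm⟩
  -- commutator identities for decompositions of elements of A
  have hzfact : ∀ k1 l1 k2 l2 : G, k1 ∈ K → l1 ∈ L → k2 ∈ K → l2 ∈ L →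
      k1 * l1 ∈ A → k2 * l2 ∈ A →
      ((k2 * k1)⁻¹ * (k1 * k2) ∈ Subgroup.center G ∧
       (k1 * l1) * (k2 * l2) = (k1 * k2) * (l1 * l2) ∧
       l2 * l1 = ((k2 * k1)⁻¹ * (k1 * k2)) * (l1 * l2)) := by
    intro k1 l1 k2 l2 hk1 hl1 hk2 hl2 ha1 ha2
    have e1 : (k1 * l1) * (k2 * l2) = (k1 * k2) * (l1 * l2) := by
      have h := hLK l1 hl1 k2 hk2
      calc (k1 * l1) * (k2 * l2) = k1 * (l1 * k2) * l2 := by group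
        _ = k1 * (k2 * l1) * l2 := by rw [h]
        _ = (k1 * k2) * (l1 * l2) := by group
    have e2 : (k2 * l2) * (k1 * l1) = (k2 * k1) * (l2 * l1) := by
      have h := hLK l2 hl2 k1 hk1
      calc (k2 * l2) * (k1 * l1) = k2 * (l2 * k1) * l1 := by group
        _ = k2 * (k1 * l2) * l1 := by rw [h]
        _ = (k2 * k1) * (l2 * l1) := by group
    have heq : (k1 * k2) * (l1 * l2) = (k2 * k1) * (l2 * l1) := by
      rw [← e1, ← e2, hAcomm _ _ ha1 ha2]
    have hlz : l2 * l1 = ((k2 * k1)⁻¹ * (k1 * k2)) * (l1 * l2) := by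
      rw [mul_assoc, heq]; group
    have hzK : (k2 * k1)⁻¹ * (k1 * k2) ∈ K :=
      mul_mem (inv_mem (mul_mem hk2 hk1)) (mul_mem hk1 hk2)
    have hzL : (k2 * k1)⁻¹ * (k1 * k2) ∈ L := by
      have h2 : (k2 * k1)⁻¹ * (k1 * k2) = (l2 * l1) * (l1 * l2)⁻¹ := by
        rw [hlz]; group
      rw [h2]
      exact mul_mem (mul_mem hl2 hl1) (inv_mem (mul_mem hl1 hl2))
    refine ⟨?_, e1, hlz⟩
    rw [← hKLinf]
    exact Subgroup.mem_inf.mpr ⟨hzK, hzL⟩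
  -- product formula for elements of the shape k⁻¹ * l
  have hxy : ∀ k1 l1 k2 l2 : G, k1 ∈ K → l1 ∈ L → k2 ∈ K → l2 ∈ L →
      (k1⁻¹ * l1) * (k2⁻¹ * l2) = (k2 * k1)⁻¹ * (l1 * l2) := by
    intro k1 l1 k2 l2 hk1 hl1 hk2 hl2
    have h : k2⁻¹ * l1 = l1 * k2⁻¹ := hLK l1 hl1 k2⁻¹ (inv_mem hk2)
    calc (k1⁻¹ * l1) * (k2⁻¹ * l2) = k1⁻¹ * (l1 * k2⁻¹) * l2 := by group
      _ = k1⁻¹ * (k2⁻¹ * l1) * l2 := by rw [h]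
      _ = (k2 * k1)⁻¹ * (l1 * l2) := by group
  -- the twisted diagonal subgroup A'
  let A' : Subgroup G := {
    carrier := {x : G | ∃ k l : G, k ∈ K ∧ l ∈ L ∧ k * l ∈ A ∧ x = k⁻¹ * l}
    one_mem' := ⟨1, 1, one_mem K, one_mem L, by simpa using one_mem A, by simp⟩
    mul_mem' := by
      rintro x1 x2 ⟨k1, l1, hk1, hl1, ha1, rfl⟩ ⟨k2, l2, hk2, hl2, ha2, rfl⟩
      refine ⟨k2 * k1, l1 * l2, mul_mem hk2 hk1, mul_mem hl1 hl2, ?_,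
        hxy k1 l1 k2 l2 hk1 hl1 hk2 hl2⟩
      obtain ⟨hzc, he1, -⟩ := hzfact k1 l1 k2 l2 hk1 hl1 hk2 hl2 ha1 ha2
      have hc := Subgroup.mem_center_iff.mp (inv_mem hzc)
      have hk2k1 : k2 * k1 = (k1 * k2) * ((k2 * k1)⁻¹ * (k1 * k2))⁻¹ := by group
      have hprod : (k2 * k1) * (l1 * l2) =
          ((k2 * k1)⁻¹ * (k1 * k2))⁻¹ * ((k1 * k2) * (l1 * l2)) := by
        calc (k2 * k1) * (l1 * l2)
            = ((k1 * k2) * ((k2 * k1)⁻¹ * (k1 * k2))⁻¹) * (l1 * l2) := by group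
          _ = (((k2 * k1)⁻¹ * (k1 * k2))⁻¹ * (k1 * k2)) * (l1 * l2) := by
              rw [hc (k1 * k2)]
          _ = ((k2 * k1)⁻¹ * (k1 * k2))⁻¹ * ((k1 * k2) * (l1 * l2)) := by group
      rw [hprod, ← he1]
      exact mul_mem (hZA.le (inv_mem hzc)) (mul_mem ha1 ha2)
    inv_mem' := by
      rintro x ⟨k, l, hk, hl, ha, rfl⟩
      have hcomm := hLK l hl k hk
      refine ⟨k⁻¹, l⁻¹, inv_mem hk, inv_mem hl, ?_, ?_⟩
      · have h2 : k⁻¹ * l⁻¹ = (k * l)⁻¹ := by rw [← mul_inv_rev, ← hcomm]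
        rw [h2]
        exact inv_mem ha
      · rw [mul_inv_rev, inv_inv]
        exact (hLK l⁻¹ (inv_mem hl) k hk).symm }
  have hmemA' : ∀ x : G, x ∈ A' ↔
      ∃ k l : G, k ∈ K ∧ l ∈ L ∧ k * l ∈ A ∧ x = k⁻¹ * l := fun x => Iff.rfl
  have hZA'le : Subgroup.center G ≤ A' := by
    intro z hz
    exact (hmemA' z).mpr ⟨1, z, one_mem K, hZL.le hz, by simpa using hZA.le hz, by simp⟩
  have hA'comm : ∀ x y : G, x ∈ A' → y ∈ A' → x * y = y * x := by
    intro x y hx hy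
    obtain ⟨k1, l1, hk1, hl1, ha1, rfl⟩ := (hmemA' x).mp hx
    obtain ⟨k2, l2, hk2, hl2, ha2, rfl⟩ := (hmemA' y).mp hy
    obtain ⟨hzc, -, hlz⟩ := hzfact k1 l1 k2 l2 hk1 hl1 hk2 hl2 ha1 ha2
    rw [hxy k1 l1 k2 l2 hk1 hl1 hk2 hl2, hxy k2 l2 k1 l1 hk2 hl2 hk1 hl1, hlz]
    have hzc' := Subgroup.mem_center_iff.mp hzc
    have hfin : (k1 * k2)⁻¹ * (((k2 * k1)⁻¹ * (k1 * k2)) * (l1 * l2)) =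
        (k2 * k1)⁻¹ * (l1 * l2) := by
      conv_lhs => rw [← mul_assoc]
      rw [hzc' ((k1 * k2)⁻¹)]
      group
    exact hfin.symm
  -- cardinality : |A| ≤ |A'|
  choose kf lf hkf hlf hklf using hdec
  let P := {qq : G × G // qq.1 ∈ K ∧ qq.2 ∈ L ∧ qq.1 * qq.2 ∈ A}
  have hprodA : ∀ (aa : ↥A) (zz : ↥(Subgroup.center G)),
      (kf (aa : G) * zz) * ((zz : G)⁻¹ * lf (aa : G)) = (aa : G) := by
    intro aa zz
    rw [mul_assoc, mul_inv_cancel_left, ← hklf]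
  let inj1 : ↥A × ↥(Subgroup.center G) → P := fun q =>
    ⟨(kf (q.1 : G) * q.2, (q.2 : G)⁻¹ * lf (q.1 : G)),
      mul_mem (hkf _) (hZK.le q.2.2),
      mul_mem (inv_mem (hZL.le q.2.2)) (hlf _),
      by rw [hprodA q.1 q.2]; exact q.1.2⟩
  have hinj1 : Function.Injective inj1 := by
    intro q q' h
    have c1 : kf (q.1 : G) * q.2 = kf (q'.1 : G) * q'.2 :=
      congrArg (fun r : P => r.1.1) h
    have c2 : (q.2 : G)⁻¹ * lf (q.1 : G) = (q'.2 : G)⁻¹ * lf (q'.1 : G) :=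
      congrArg (fun r : P => r.1.2) h
    have ha : (q.1 : G) = q'.1 := by
      rw [← hprodA q.1 q.2, ← hprodA q'.1 q'.2, c1, c2]
    have hz : (q.2 : G) = q'.2 := by
      have := c1
      rw [show kf (q'.1 : G) = kf (q.1 : G) by rw [ha]] at this
      exact mul_left_cancel this
    exact Prod.ext (Subtype.ext ha) (Subtype.ext hz)
  have hwA' : ∀ x : ↥A', ∃ qq : G × G,
      qq.1 ∈ K ∧ qq.2 ∈ L ∧ qq.1 * qq.2 ∈ A ∧ (x : G) = qq.1⁻¹ * qq.2 := by
    intro x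
    obtain ⟨k, l, h1, h2, h3, h4⟩ := (hmemA' x).mp x.2
    exact ⟨(k, l), h1, h2, h3, h4⟩
  choose cw hcw1 hcw2 hcw3 hcw4 using hwA'
  let xmap : P → ↥A' := fun q =>
    ⟨q.1.1⁻¹ * q.1.2, (hmemA' _).mpr ⟨q.1.1, q.1.2, q.2.1, q.2.2.1, q.2.2.2, rfl⟩⟩
  have hzmem : ∀ q : P, (cw (xmap q)).1 * q.1.1⁻¹ ∈ Subgroup.center G := by
    intro q
    have h4 := hcw4 (xmap q)
    have hxval : (xmap q : G) = q.1.1⁻¹ * q.1.2 := rfl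
    rw [hxval] at h4
    have hL2 : (cw (xmap q)).1 * q.1.1⁻¹ = (cw (xmap q)).2 * q.1.2⁻¹ := by
      calc (cw (xmap q)).1 * q.1.1⁻¹
          = (cw (xmap q)).1 * ((q.1.1⁻¹ * q.1.2) * q.1.2⁻¹) := by group
        _ = (cw (xmap q)).1 * (((cw (xmap q)).1⁻¹ * (cw (xmap q)).2) * q.1.2⁻¹) := by
            rw [← h4]
        _ = (cw (xmap q)).2 * q.1.2⁻¹ := by group
    rw [← hKLinf]
    refine Subgroup.mem_inf.mpr ⟨mul_mem (hcw1 _) (inv_mem q.2.1), ?_⟩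
    rw [hL2]
    exact mul_mem (hcw2 _) (inv_mem q.2.2.1)
  let inj2 : P → ↥A' × ↥(Subgroup.center G) := fun q =>
    (xmap q, ⟨(cw (xmap q)).1 * q.1.1⁻¹, hzmem q⟩)
  have hinj2 : Function.Injective inj2 := by
    intro q q' h
    have hx : xmap q = xmap q' := congrArg Prod.fst h
    have hz : (cw (xmap q)).1 * q.1.1⁻¹ = (cw (xmap q')).1 * q'.1.1⁻¹ :=
      congrArg (fun r : ↥A' × ↥(Subgroup.center G) => (r.2 : G)) h
    rw [← hx] at hz
    have hk : q.1.1 = q'.1.1 := by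
      have := mul_left_cancel hz
      exact inv_injective this
    have hxval : q.1.1⁻¹ * q.1.2 = q'.1.1⁻¹ * q'.1.2 := by
      have := congrArg (fun r : ↥A' => (r : G)) hx
      exact this
    have hl : q.1.2 = q'.1.2 := by
      rw [hk] at hxval
      exact mul_left_cancel hxval
    exact Subtype.ext (Prod.ext hk hl)
  have cardAleA' : Nat.card A ≤ Nat.card A' := by
    have hc1 : Nat.card (↥A × ↥(Subgroup.center G)) ≤ Nat.card P :=
      Nat.card_le_card_of_injective inj1 hinj1
    have hc2 : Nat.card P ≤ Nat.card (↥A' × ↥(Subgroup.center G)) :=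
      Nat.card_le_card_of_injective inj2 hinj2
    have := hc1.trans hc2
    rw [Nat.card_prod, Nat.card_prod] at this
    exact Nat.le_of_mul_le_mul_right this hZpos
  -- A' is an abelian atom, hence A' = A
  have hA'leC : A' ≤ Subgroup.centralizer (A' : Set G) := by
    intro x hx
    rw [Subgroup.mem_centralizer_iff]
    intro h hh
    exact hA'comm h x hh hx
  have hA'cd : inCD A' := by
    intro H
    refine (hT H).trans ?_
    calc CDmeasure ⊤ = Nat.card G * Nat.card (Subgroup.center G) := CDmeasure_top'
      _ = Nat.card A * Nat.card A := cardA.symm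
      _ ≤ Nat.card A' * Nat.card A' := Nat.mul_le_mul cardAleA' cardAleA'
      _ ≤ Nat.card A' * Nat.card (Subgroup.centralizer (A' : Set G)) :=
          Nat.mul_le_mul_left _ (Subgroup.card_le_of_le hA'leC)
      _ = CDmeasure A' := rfl
  have hZA'lt : Subgroup.center G < A' := by
    refine hZA'le.lt_of_ne ?_
    intro heq
    have h2 := cardZltA.trans_le cardAleA'
    rw [heq] at h2
    exact lt_irrefl _ h2
  have hA't : A' < ⊤ := by
    rw [lt_top_iff_ne_top]
    intro heq
    have hcen : (⊤ : Subgroup G) ≤ Subgroup.center G := by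
      intro g _
      rw [Subgroup.mem_center_iff]
      intro h
      exact hA'comm h g (heq ▸ Subgroup.mem_top h) (heq ▸ Subgroup.mem_top g)
    exact hZK.not_ge (le_trans le_top hcen)
  have hA'mem : A' ∈ abelianAtoms G :=
    ⟨hA'cd, hZA'lt, hA't, fun x y => Subtype.ext (hA'comm x y x.2 y.2)⟩
  have hA'A : A' = A := by
    rw [hAsingle] at hA'mem
    exact hA'mem
  -- endgame: pick an element of A outside the center
  obtain ⟨g0, hg0A, hg0Z⟩ := SetLike.exists_of_lt hZA
  obtain ⟨k0, l0, hk0, hl0, hg0kl⟩ : ∃ k l : G, k ∈ K ∧ l ∈ L ∧ g0 = k * l :=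
    ⟨kf g0, lf g0, hkf g0, hlf g0, hklf g0⟩
  have hx'A : k0⁻¹ * l0 ∈ A := by
    have hmem : k0⁻¹ * l0 ∈ A' :=
      (hmemA' _).mpr ⟨k0, l0, hk0, hl0, hg0kl ▸ hg0A, rfl⟩
    rwa [hA'A] at hmem
  have hk2A : k0 * k0 ∈ A := by
    have heq2 : k0 * k0 = g0 * (k0⁻¹ * l0)⁻¹ := by rw [hg0kl]; group
    rw [heq2]
    exact mul_mem hg0A (inv_mem hx'A)
  have hk2Z : k0 * k0 ∈ Subgroup.center G := by
    rw [← hAKinf]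
    exact Subgroup.mem_inf.mpr ⟨hk2A, mul_mem hk0 hk0⟩
  have hkZ : k0 ∉ Subgroup.center G := by
    intro hkc
    have hlA : l0 ∈ A := by
      have h5 : l0 = k0⁻¹ * g0 := by rw [hg0kl]; group
      rw [h5]
      exact mul_mem (hZA.le (inv_mem hkc)) hg0A
    have hlZ : l0 ∈ Subgroup.center G := by
      rw [← hALinf]
      exact Subgroup.mem_inf.mpr ⟨hlA, hl0⟩
    apply hg0Z
    rw [hg0kl]
    exact mul_mem hkc hlZ
  -- order 2 element in G / Z(G), a p-group
  have hQp : IsPGroup p (G ⧸ Subgroup.center G) := hpG.to_quotient (Subgroup.center G)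
  have hq1 : (QuotientGroup.mk (k0) : G ⧸ Subgroup.center G) ≠ 1 := by
    rw [Ne, QuotientGroup.eq_one_iff]
    exact hkZ
  have hq2 : (QuotientGroup.mk (k0) : G ⧸ Subgroup.center G) ^ 2 = 1 := by
    rw [pow_two, ← QuotientGroup.mk_mul, QuotientGroup.eq_one_iff]
    exact hk2Z
  have hord2 : orderOf (QuotientGroup.mk (k0) : G ⧸ Subgroup.center G) = 2 := by
    have hdvd : orderOf (QuotientGroup.mk (k0) : G ⧸ Subgroup.center G) ∣ 2 :=
      orderOf_dvd_of_pow_eq_one hq2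
    have hne : orderOf (QuotientGroup.mk (k0) : G ⧸ Subgroup.center G) ≠ 1 :=
      fun h => hq1 (orderOf_eq_one_iff.mp h)
    exact (Nat.prime_two.eq_one_or_self_of_dvd _ hdvd).resolve_left hne
  obtain ⟨n, hn⟩ := hQp (QuotientGroup.mk (k0))
  have h2pn : (2 : ℕ) ∣ p ^ n := hord2 ▸ orderOf_dvd_of_pow_eq_one hn
  have h2p : (2 : ℕ) ∣ p := Nat.Prime.dvd_of_dvd_pow Nat.prime_two h2pn
  exact ((Nat.prime_dvd_prime_iff_eq Nat.prime_two hp).mp h2p).symm
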